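/- arXiv:2207.06385 — 5 statements merged into one kernel-verified Lean document; each statement's English description precedes it below -/
import Mathlib

section
/- Let d > 1 be a squarefree integer, K = ℚ(√d), and let u be the fundamental unit of K with u > 1 (a generator of O_K^× modulo ±1). Then a totally positive a ∈ K is reduced, i.e., Tr(a) ≤ Tr(a v²) for all v ∈ O_K^×, if and only if both Tr(a) ≤ Tr(a u²) and Tr(a) ≤ Tr(a u^{−2}) hold. -/
open NumberField Module

/-- An element of a number field is totally positive if it is positive under
every real embedding. -/
def TotPos {K : Type*} [Field K] (a : K) : Prop := ∀ τ : K →+* ℝ, 0 < τ a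

/-- A convexity-style induction for sequences satisfying `F (n+2) + F n = t * F (n+1)`. -/
lemma aux_mono (t : ℚ) (ht : 2 < t) (F : ℕ → ℚ) (hpos : ∀ n, 0 < F n)
    (hrec : ∀ n : ℕ, F (n + 2) + F n = t * F (n + 1)) (h01 : F 0 ≤ F 1) :
    ∀ n, F 0 ≤ F n := by
  have step : ∀ n, F n ≤ F (n + 1) := by
    intro n
    induction n with
    | zero => exact h01
    | succ m ih =>
      have h1 := hrec m
      have h2 := hpos (m + 1)
      nlinarith
  intro n
  induction n with
  | zero => exact le_refl _
  | succ m ih => exact ih.trans (step m)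

lemma aux_irr (d : ℤ) (hd1 : 1 < d) (hdsf : Squarefree d) (q : ℚ) : q * q ≠ (d : ℚ) := by
  intro h
  have hnum : q.num * q.num = d := by
    rw [← Rat.mul_self_num, h, Rat.num_intCast]
  have hu : IsUnit q.num := hdsf q.num ⟨1, by rw [hnum, mul_one]⟩
  rcases Int.isUnit_iff.mp hu with h1 | h1 <;> rw [h1] at hnum <;> omega

section Emb

variable {K : Type*} [Field K] [NumberField K]

lemma aux_real (d : ℤ) (hd1 : 1 < d) (hdsf : Squarefree d)
    (sq : K) (hsq : sq ^ 2 = (d : K)) (hdeg : finrank ℚ K = 2)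
    (φ : K →ₐ[ℚ] ℂ) : ∃ ψ : K →+* ℝ, ∀ x, φ x = ψ x := by
  -- `sq` is irrational
  have hirr : ∀ q : ℚ, (q : K) ≠ sq := by
    intro q hq
    have h1 : ((q * q : ℚ) : K) = ((d : ℚ) : K) := by
      push_cast
      rw [hq, ← hsq]; ring
    exact aux_irr d hd1 hdsf q ((Rat.cast_injective) h1)
  -- linear independence of 1, sq
  have hli : LinearIndependent ℚ ![(1 : K), sq] := by
    rw [LinearIndependent.pair_iff' one_ne_zero]
    intro a ha
    exact hirr a (by simpa [Algebra.smul_def] using ha)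
  let b : Basis (Fin 2) ℚ K :=
    basisOfLinearIndependentOfCardEqFinrank hli (by simp [hdeg])
  have hb : ∀ i, b i = ![(1 : K), sq] i := by
    intro i; rw [coe_basisOfLinearIndependentOfCardEqFinrank]
  have hdecomp : ∀ x : K, ∃ p q : ℚ, x = (p : K) + (q : K) * sq := by
    intro x
    refine ⟨b.repr x 0, b.repr x 1, ?_⟩
    have h := b.sum_repr x
    rw [Fin.sum_univ_two, hb 0, hb 1] at h
    simp only [Matrix.cons_val_zero, Matrix.cons_val_one, Matrix.head_cons] at h
    have e1 : (b.repr x 0) • (1 : K) = ((b.repr x 0 : ℚ) : K) := by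
      rw [Algebra.smul_def, mul_one, eq_ratCast]
    have e2 : (b.repr x 1) • sq = ((b.repr x 1 : ℚ) : K) * sq := by
      rw [Algebra.smul_def, eq_ratCast]
    rw [e1, e2] at h
    exact h.symm
  -- φ sq is real
  have hz : (φ sq) ^ 2 = ((d : ℤ) : ℂ) := by
    rw [← map_pow, hsq, map_intCast]
  have him_sq : (φ sq).im = 0 := by
    set z := φ sq with hzdef
    have h1 : (z ^ 2).im = 0 := by rw [hz]; simp
    have h2 : ((1:ℝ)) < (z ^ 2).re := by
      rw [hz]; simp; exact_mod_cast hd1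
    rw [pow_two] at h1 h2
    simp only [Complex.mul_im, Complex.mul_re] at h1 h2
    rcases mul_eq_zero.mp (by linarith : z.re * z.im = 0) with h | h
    · nlinarith
    · exact h
  have him : ∀ x, (φ x).im = 0 := by
    intro x
    obtain ⟨p, q, rfl⟩ := hdecomp x
    rw [map_add, map_mul, map_ratCast, map_ratCast]
    simp [Complex.add_im, Complex.mul_im, him_sq]
  refine ⟨{ toFun := fun x => (φ x).re,
            map_one' := by simp,
            map_mul' := fun x y => by
              show (φ (x * y)).re = (φ x).re * (φ y).re
              rw [map_mul]; simp [Complex.mul_re, him x, him y],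
            map_zero' := by simp,
            map_add' := fun x y => by
              show (φ (x + y)).re = (φ x).re + (φ y).re
              rw [map_add]; simp }, ?_⟩
  intro x
  have := him x
  simp only [RingHom.coe_mk, MonoidHom.coe_mk, OneHom.coe_mk]
  exact (Complex.ext (by simp) (by simp [this])).symm

lemma aux_tracepos (d : ℤ) (hd1 : 1 < d) (hdsf : Squarefree d)
    (sq : K) (hsq : sq ^ 2 = (d : K)) (hdeg : finrank ℚ K = 2)
    (x : K) (hx : ∀ τ : K →+* ℝ, 0 < τ x) : 0 < Algebra.trace ℚ K x := by
  have h := trace_eq_sum_embeddings (K := ℚ) (L := K) (E := ℂ) (x := x)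
  have hre : ((Algebra.trace ℚ K x : ℚ) : ℝ) = ∑ φ : K →ₐ[ℚ] ℂ, (φ x).re := by
    have h2 := congrArg Complex.re h
    rw [Complex.re_sum] at h2
    simpa using h2
  have hne : Nonempty (K →ₐ[ℚ] ℂ) := by
    have : 0 < Fintype.card (K →ₐ[ℚ] ℂ) := by
      rw [AlgHom.card]; omega
    exact Fintype.card_pos_iff.mp this
  have hpos : (0 : ℝ) < ∑ φ : K →ₐ[ℚ] ℂ, (φ x).re := by
    apply Finset.sum_pos
    · intro φ _
      obtain ⟨ψ, hψ⟩ := aux_real d hd1 hdsf sq hsq hdeg φ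
      rw [hψ x]
      simpa using hx ψ
    · exact Finset.univ_nonempty
  rw [← Rat.cast_pos (K := ℝ), hre]  -- may need adjusting
  exact hpos

end Emb


theorem stmt5 (d : ℤ) (hd1 : 1 < d) (hdsf : Squarefree d)
    (K : Type*) [Field K] [NumberField K] (sq : K)
    (hsq : sq ^ 2 = (d : K)) (hdeg : finrank ℚ K = 2)
    -- a real embedding of `K`
    (τ₀ : K →+* ℝ)
    -- `u` is the fundamental unit: `u > 1` and `O_K^×` is generated by `u` and `-1`
    (u : (𝓞 K)ˣ) (hu1 : 1 < τ₀ ((u : 𝓞 K) : K))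
    (hfund : ∀ v : (𝓞 K)ˣ, ∃ k : ℤ,
      ((v : 𝓞 K) : K) = ((u : 𝓞 K) : K) ^ k ∨ ((v : 𝓞 K) : K) = -((u : 𝓞 K) : K) ^ k)
    (a : K) (ha : TotPos a) :
    (∀ v : (𝓞 K)ˣ,
        Algebra.trace ℚ K a ≤ Algebra.trace ℚ K (a * ((v : 𝓞 K) : K) ^ 2)) ↔
      (Algebra.trace ℚ K a ≤ Algebra.trace ℚ K (a * ((u : 𝓞 K) : K) ^ 2) ∧
       Algebra.trace ℚ K a ≤ Algebra.trace ℚ K (a * (((u⁻¹ : (𝓞 K)ˣ) : 𝓞 K) : K) ^ 2)) := by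
  classical
  set uK : K := ((u : 𝓞 K) : K) with huK
  -- inverse coercion
  have hmul : uK * (((u⁻¹ : (𝓞 K)ˣ) : 𝓞 K) : K) = 1 := by
    have h1 : ((u : 𝓞 K) * ((u⁻¹ : (𝓞 K)ˣ) : 𝓞 K)) = 1 := by
      exact_mod_cast u.mul_inv
    calc uK * (((u⁻¹ : (𝓞 K)ˣ) : 𝓞 K) : K)
        = (((u : 𝓞 K) * ((u⁻¹ : (𝓞 K)ˣ) : 𝓞 K) : 𝓞 K) : K) := by push_cast; ring
      _ = 1 := by rw [h1]; exact map_one (algebraMap (𝓞 K) K)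
  have huK0 : uK ≠ 0 := left_ne_zero_of_mul_eq_one hmul
  have hinv : (((u⁻¹ : (𝓞 K)ˣ) : 𝓞 K) : K) = uK⁻¹ := eq_inv_of_mul_eq_one_right hmul
  set w : K := uK ^ 2 with hw
  have hw0 : w ≠ 0 := pow_ne_zero 2 huK0
  -- norm of w is 1
  have hnorm : Algebra.norm ℚ w = 1 := by
    have h1 : |(RingOfIntegers.norm ℚ (u : 𝓞 K) : ℚ)| = 1 :=
      NumberField.isUnit_iff_norm.mp u.isUnit
    rw [RingOfIntegers.coe_norm] at h1
    have : Algebra.norm ℚ w = (Algebra.norm ℚ uK) ^ 2 := by rw [hw, map_pow]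
    rw [this, ← sq_abs, h1, one_pow]
  -- two embeddings
  have hcard : Fintype.card (K →ₐ[ℚ] ℂ) = 2 := by rw [AlgHom.card]; exact hdeg
  obtain ⟨A, B, hAB, hU⟩ := Finset.card_eq_two.mp
    (by rw [Finset.card_univ, hcard] : (Finset.univ : Finset (K →ₐ[ℚ] ℂ)).card = 2)
  set t : ℚ := Algebra.trace ℚ K w with htdef
  have htr : ((t : ℚ) : ℂ) = A w + B w := by
    have h := trace_eq_sum_embeddings (K := ℚ) (L := K) (E := ℂ) (x := w)
    rw [hU, Finset.sum_pair hAB] at h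
    rw [← h, eq_ratCast (algebraMap ℚ ℂ) t]
  have hnm : A w * B w = 1 := by
    have h := Algebra.norm_eq_prod_embeddings ℚ ℂ (x := w)
    rw [hU, Finset.prod_pair hAB] at h
    rw [← h, hnorm, map_one]
  have hA0 : A w ≠ 0 := left_ne_zero_of_mul_eq_one hnm
  have hquad : w + w⁻¹ = algebraMap ℚ K t := by
    apply (A : K →+* ℂ).injective
    have hABw : B w = (A w)⁻¹ := eq_inv_of_mul_eq_one_right hnm
    show A (w + w⁻¹) = A (algebraMap ℚ K t)
    rw [map_add, map_inv₀, A.commutes, eq_ratCast (algebraMap ℚ ℂ) t, htr, hABw]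
  -- t > 2
  have ht2 : 2 < t := by
    have h := congrArg τ₀ hquad
    rw [map_add, map_inv₀, eq_ratCast (algebraMap ℚ K) t, map_ratCast] at h
    have hl : (1 : ℝ) < τ₀ w := by
      rw [hw, map_pow]; nlinarith
    have hl0 : τ₀ w ≠ 0 := by positivity
    have hinv1 : τ₀ w * (τ₀ w)⁻¹ = 1 := mul_inv_cancel₀ hl0
    have : (2 : ℝ) < (t : ℚ) := by
      rw [← h]; nlinarith [sq_nonneg (τ₀ w - 1), inv_pos.mpr (lt_trans one_pos hl)]
    exact_mod_cast this
  -- the sequence f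
  set f : ℤ → ℚ := fun k => Algebra.trace ℚ K (a * w ^ k) with hf
  have hTP : ∀ k : ℤ, ∀ τ : K →+* ℝ, 0 < τ (a * w ^ k) := by
    intro k τ
    have huτ : τ uK ≠ 0 := fun h => huK0 (τ.injective (by rw [h, map_zero]))
    have hwτ : 0 < τ w := by
      rw [hw, map_pow]
      exact pow_two_pos_of_ne_zero huτ
    rw [map_mul, map_zpow₀]
    exact mul_pos (ha τ) (zpow_pos hwτ k)
  have hpos : ∀ k : ℤ, 0 < f k := fun k =>
    aux_tracepos d hd1 hdsf sq hsq hdeg _ (hTP k)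
  have hrec : ∀ k : ℤ, f (k + 1) + f (k - 1) = t * f k := by
    intro k
    have key : a * w ^ (k + 1) + a * w ^ (k - 1) = t • (a * w ^ k) := by
      rw [zpow_add_one₀ hw0, zpow_sub_one₀ hw0, Algebra.smul_def, ← hquad]
      ring
    calc f (k + 1) + f (k - 1)
        = Algebra.trace ℚ K (a * w ^ (k + 1) + a * w ^ (k - 1)) := (map_add _ _ _).symm
      _ = Algebra.trace ℚ K (t • (a * w ^ k)) := by rw [key]
      _ = t * f k := by rw [map_smul, smul_eq_mul]
  have h0 : f 0 = Algebra.trace ℚ K a := by simp [hf]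
  have h1' : f 1 = Algebra.trace ℚ K (a * uK ^ 2) := by
    simp [hf, hw]
  have hm1 : f (-1) = Algebra.trace ℚ K (a * (((u⁻¹ : (𝓞 K)ˣ) : 𝓞 K) : K) ^ 2) := by
    show Algebra.trace ℚ K (a * w ^ (-1 : ℤ)) = _
    congr 1
    rw [hinv, zpow_neg, zpow_one, hw, inv_pow]
  -- main conclusion from the recurrence
  have hmain : (f 0 ≤ f 1 ∧ f 0 ≤ f (-1)) → ∀ k : ℤ, f 0 ≤ f k := by
    rintro ⟨hp, hm⟩ k
    have hP : ∀ n : ℕ, f 0 ≤ f n := by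
      apply aux_mono t ht2 (fun n => f n) (fun n => hpos n)
      · intro n
        have h := hrec ((n : ℤ) + 1)
        have e1 : ((n : ℤ) + 1) + 1 = ((n : ℤ) + 2) := by ring
        have e2 : ((n : ℤ) + 1) - 1 = (n : ℤ) := by ring
        rw [e1, e2] at h
        show f ((n + 2 : ℕ) : ℤ) + f ((n : ℕ) : ℤ) = t * f ((n + 1 : ℕ) : ℤ)
        push_cast
        exact h
      · exact hp
    have hN : ∀ n : ℕ, f 0 ≤ f (-n) := by
      apply aux_mono t ht2 (fun n => f (-n)) (fun n => hpos _)
      · intro n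
        have h := hrec (-(n : ℤ) - 1)
        have e1 : (-(n : ℤ) - 1) + 1 = -(n : ℤ) := by ring
        have e2 : (-(n : ℤ) - 1) - 1 = -((n : ℤ) + 2) := by ring
        have e3 : -(n : ℤ) - 1 = -((n : ℤ) + 1) := by ring
        rw [e1, e2, e3] at h
        show f (-((n + 2 : ℕ) : ℤ)) + f (-((n : ℕ) : ℤ)) = t * f (-((n + 1 : ℕ) : ℤ))
        push_cast
        linarith
      · simpa using hm
    rcases Int.natAbs_eq k with hk | hk
    · rw [hk]; exact hP k.natAbs
    · rw [hk]; exact hN k.natAbs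
  constructor
  · intro h
    exact ⟨h u, h u⁻¹⟩
  · rintro ⟨hA1, hA2⟩ v
    obtain ⟨k, hk⟩ := hfund v
    have hv2 : ((v : 𝓞 K) : K) ^ 2 = w ^ k := by
      have base : (uK ^ k) ^ 2 = w ^ k := by
        rw [hw, ← zpow_natCast (uK ^ k) 2, ← zpow_natCast uK 2, ← zpow_mul, ← zpow_mul,
          mul_comm]
      rcases hk with hk | hk
      · rw [hk]; exact base
      · rw [hk, neg_pow, ← base]; norm_num
    have hle : f 0 ≤ f k := hmain ⟨by rw [h0, h1']; exact hA1, by rw [h0, hm1]; exact hA2⟩ k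
    rw [h0] at hle
    calc Algebra.trace ℚ K a ≤ f k := hle
      _ = Algebra.trace ℚ K (a * ((v : 𝓞 K) : K) ^ 2) := by rw [hf, hv2]
end

section
/- Let d > 1 be a squarefree integer, K = ℚ(√d), and let u > 1 be the fundamental unit of K; write u² = u₁ + u₂√d with rationals u₁, u₂ > 0. Then a totally positive element a = a₁ + a₂√d (a₁, a₂ ∈ ℚ) is reduced, i.e., Tr(a) ≤ Tr(a v²) for all v ∈ O_K^×, if and only if |a₂|/a₁ ≤ (u₁ − 1)/(d·u₂). -/
open NumberField Module

/-!
Let `σ` be the conjugation of `K`. Since `Tr x = x + σ x`, the inequality `Tr a ≤ Tr (a v²)` for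
`v = ±uᵏ` reads `P + Q ≤ P Eᵏ + Q E⁻ᵏ` in `ℝ`, where `P = τ₀ a`, `Q = τ₀ (σ a)`, `E = τ₀ (u²) > 1`,
and `τ₀ (σ (u²)) = E⁻¹` because the unit `u²` has norm `u₁² - d u₂² = 1`. As
`P x + Q x⁻¹ - (P + Q) = (x - 1) (P x - Q) / x`, the inequality holds for every `k` once it holds
for `k = ±1`, that is, iff `Q ≤ P E` and `P ≤ Q E`. Substituting `P, Q = a₁ ± a₂ √d` and
`E, E⁻¹ = u₁ ± u₂ √d` turns these two conditions into `± a₂ d u₂ ≤ a₁ (u₁ - 1)`.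
-/

theorem sq_ne_intCast_of_squarefree {d : ℤ} (hd : Squarefree d) (hd1 : d ≠ 1) (q : ℚ) :
    q ^ 2 ≠ d := by
  intro hq
  obtain ⟨n, rfl⟩ := Rat.isSquare_intCast_iff.mp ⟨q, by rw [← hq, sq]⟩
  exact hd1 (Int.isUnit_mul_self (hd n dvd_rfl))

section QuadraticExtension

open Polynomial IntermediateField

variable {F L : Type*} [Field F] [Field L] [Algebra F L] {c : F} {s : L}

theorem minpoly_eq_X_sq_sub_C (hs : s ^ 2 = algebraMap F L c) (hc : ∀ q : F, q ^ 2 ≠ c) :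
    minpoly F s = X ^ 2 - C c :=
  (minpoly.eq_of_irreducible_of_monic (X_pow_sub_C_irreducible_of_prime Nat.prime_two hc)
    (by simp [hs]) (monic_X_pow_sub_C c two_ne_zero)).symm

theorem exists_algHom_apply_eq_neg_and_trace_eq_add (hs : s ^ 2 = algebraMap F L c)
    (hc : ∀ q : F, q ^ 2 ≠ c) (hL : finrank F L = 2) :
    ∃ σ : L →ₐ[F] L, σ s = -s ∧ ∀ x, algebraMap F L (Algebra.trace F L x) = x + σ x := by
  have : FiniteDimensional F L := .of_finrank_pos (by omega)
  have hmin := minpoly_eq_X_sq_sub_C hs hc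
  have hint : IsIntegral F s := .of_finite F s
  have htop : F⟮s⟯ = ⊤ := eq_of_le_of_finrank_eq le_top <| by
    rw [adjoin.finrank hint, hmin, natDegree_X_pow_sub_C, finrank_top', hL]
  let pb := PowerBasis.ofAdjoinEqTop hint
    (Algebra.adjoin_eq_top_of_primitive_element hint.isAlgebraic htop)
  have hroot : aeval (-s) (minpoly F pb.gen) = 0 := by simp [pb, hmin, hs]
  refine ⟨pb.lift (-s) hroot, pb.lift_gen _ hroot, fun x => ?_⟩
  have htrace_s : Algebra.trace F L s = 0 := by
    simpa [pb, hmin, nextCoeff, coeff_C] using pb.trace_gen_eq_nextCoeff_minpoly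
  have hdim : pb.dim = 2 := by simp [pb, hmin]
  suffices (Algebra.linearMap F L).comp (Algebra.trace F L) =
      LinearMap.id + (pb.lift (-s) hroot).toLinearMap from LinearMap.congr_fun this x
  refine pb.basis.ext fun ⟨i, hi⟩ => ?_
  simp only [pb.basis_eq_pow, LinearMap.comp_apply, LinearMap.add_apply, LinearMap.id_apply,
    AlgHom.toLinearMap_apply, Algebra.linearMap_apply]
  rw [hdim] at hi
  interval_cases i
  · have htrace_one : Algebra.trace F L 1 = 2 := by
      rw [← map_one (algebraMap F L), Algebra.trace_algebraMap, hL, two_nsmul, one_add_one_eq_two]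
    rw [pow_zero, htrace_one, map_ofNat, map_one (pb.lift (-s) hroot), one_add_one_eq_two]
  · rw [pow_one, pb.lift_gen, show pb.gen = s from rfl, htrace_s, map_zero, add_neg_cancel]

end QuadraticExtension

section OrderedField

variable {α : Type*} [Field α] [LinearOrder α] [IsStrictOrderedRing α]

theorem add_le_mul_add_mul_inv_iff {P Q x : α} (hx : 0 < x) :
    P + Q ≤ P * x + Q * x⁻¹ ↔ 0 ≤ (x - 1) * (P * x - Q) := by
  have h : (P * x + Q * x⁻¹ - (P + Q)) * x = (x - 1) * (P * x - Q) := by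
    field_simp
    ring
  rw [← sub_nonneg, ← mul_nonneg_iff_of_pos_right hx, h]

theorem forall_add_le_mul_zpow_add_mul_zpow_inv_iff {P Q E : α} (hP : 0 ≤ P) (hE : 1 < E) :
    (∀ k : ℤ, P + Q ≤ P * E ^ k + Q * (E ^ k)⁻¹) ↔ Q ≤ P * E ∧ P ≤ Q * E := by
  have hE0 : 0 < E := zero_lt_one.trans hE
  simp_rw [add_le_mul_add_mul_inv_iff (zpow_pos hE0 _)]
  have hE' : E⁻¹ < 1 := inv_lt_one_of_one_lt₀ hE
  constructor
  · intro h
    have h₁ := h 1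
    have h₂ := h (-1)
    rw [zpow_one] at h₁
    rw [zpow_neg_one] at h₂
    refine ⟨sub_nonneg.mp (nonneg_of_mul_nonneg_right h₁ (sub_pos.mpr hE)), ?_⟩
    rw [← div_le_iff₀ hE0, div_eq_mul_inv, ← sub_nonpos]
    exact nonpos_of_mul_nonneg_right h₂ (sub_neg.mpr hE')
  · rintro ⟨h₁, h₂⟩ k
    rcases lt_trichotomy k 0 with hk | rfl | hk
    · have hk' : E ^ k ≤ E ^ (-1 : ℤ) := zpow_le_zpow_right₀ hE.le (by omega)
      rw [zpow_neg_one] at hk'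
      have : P * E⁻¹ ≤ Q := by rwa [← div_eq_mul_inv, div_le_iff₀ hE0]
      refine mul_nonneg_of_nonpos_of_nonpos (by linarith) ?_
      nlinarith [mul_le_mul_of_nonneg_left hk' hP]
    · simp
    · have hk' : E ^ (1 : ℤ) ≤ E ^ k := zpow_le_zpow_right₀ hE.le (by omega)
      rw [zpow_one] at hk'
      refine mul_nonneg (by linarith) ?_
      nlinarith [mul_le_mul_of_nonneg_left hk' hP]

theorem le_mul_and_le_mul_iff_abs_le {a₁ a₂ u₁ u₂ r : α}
    (hN : (u₁ + u₂ * r) * (u₁ - u₂ * r) = 1) (hE : 1 < u₁ + u₂ * r) :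
    (a₁ - a₂ * r ≤ (a₁ + a₂ * r) * (u₁ + u₂ * r) ∧
        a₁ + a₂ * r ≤ (a₁ - a₂ * r) * (u₁ + u₂ * r)) ↔
      |a₂ * (u₂ * r ^ 2)| ≤ a₁ * (u₁ - 1) := by
  have hF : 0 < 1 - (u₁ - u₂ * r) := by nlinarith
  have h₁ : a₁ - a₂ * r ≤ (a₁ + a₂ * r) * (u₁ + u₂ * r) ↔
      -(a₁ * (u₁ - 1)) ≤ a₂ * (u₂ * r ^ 2) := by
    rw [← sub_nonneg, ← mul_nonneg_iff_of_pos_left hF]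
    have : (1 - (u₁ - u₂ * r)) * ((a₁ + a₂ * r) * (u₁ + u₂ * r) - (a₁ - a₂ * r)) =
        2 * (a₁ * (u₁ - 1) + a₂ * (u₂ * r ^ 2)) := by linear_combination -(a₁ + a₂ * r) * hN
    constructor <;> intro <;> linarith
  have h₂ : a₁ + a₂ * r ≤ (a₁ - a₂ * r) * (u₁ + u₂ * r) ↔
      a₂ * (u₂ * r ^ 2) ≤ a₁ * (u₁ - 1) := by
    rw [← sub_nonneg, ← mul_nonneg_iff_of_pos_left hF]
    have : (1 - (u₁ - u₂ * r)) * ((a₁ - a₂ * r) * (u₁ + u₂ * r) - (a₁ + a₂ * r)) =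
        2 * (a₁ * (u₁ - 1) - a₂ * (u₂ * r ^ 2)) := by linear_combination (a₂ * r - a₁) * hN
    constructor <;> intro <;> linarith
  rw [h₁, h₂, abs_le]

end OrderedField

section NumberField

variable {K : Type*} [Field K] [NumberField K]

theorem NumberField.Units.abs_eq_one_of_coe_eq_ratCast
    (v : (𝓞 K)ˣ) {q : ℚ} (hv : (v : K) = q) : |q| = 1 := by
  have h := NumberField.Units.norm K v
  rw [hv, ← eq_ratCast (algebraMap ℚ K), Algebra.norm_algebraMap, abs_pow] at h
  exact (pow_eq_one_iff_of_nonneg (abs_nonneg q) finrank_pos.ne').mp h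

theorem sq_sub_mul_sq_eq_one_of_unit_sq_eq {d u₁ u₂ : ℚ} {s : K} (σ : K →+* K) (τ : K →+* ℝ)
    (hs : s ^ 2 = d) (hσ : σ s = -s) (u : (𝓞 K)ˣ)
    (hu : ((u : 𝓞 K) : K) ^ 2 = u₁ + u₂ * s) : u₁ ^ 2 - d * u₂ ^ 2 = 1 := by
  let v : (𝓞 K)ˣ := u ^ 2 * Units.map (RingOfIntegers.mapRingHom σ : 𝓞 K →* 𝓞 K) u ^ 2
  have hσu : σ ((u : 𝓞 K) : K) ^ 2 = u₁ - u₂ * s := by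
    rw [← map_pow, hu, map_add, map_mul, map_ratCast, map_ratCast, hσ]
    ring
  have hv : ((v : 𝓞 K) : K) = ((u : 𝓞 K) : K) ^ 2 * σ ((u : 𝓞 K) : K) ^ 2 := by
    simp [v]
  have hvN : ((v : 𝓞 K) : K) = ((u₁ ^ 2 - d * u₂ ^ 2 : ℚ) : K) := by
    rw [hv, hu, hσu]
    push_cast
    linear_combination (-(u₂ : K) ^ 2) * hs
  have hN : (0 : ℝ) ≤ ((u₁ ^ 2 - d * u₂ ^ 2 : ℚ) : ℝ) := by
    rw [← map_ratCast τ, ← hvN, hv, map_mul, map_pow, map_pow]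
    positivity
  rw [← abs_of_nonneg (Rat.cast_nonneg.mp hN)]
  exact NumberField.Units.abs_eq_one_of_coe_eq_ratCast v hvN

theorem forall_trace_le_trace_mul_sq_iff (σ : K →+* K) (τ : K →+* ℝ)
    (htr : ∀ x, algebraMap ℚ K (Algebra.trace ℚ K x) = x + σ x) (u : (𝓞 K)ˣ)
    (hfund : ∀ v : (𝓞 K)ˣ, ∃ k : ℤ,
      ((v : 𝓞 K) : K) = ((u : 𝓞 K) : K) ^ k ∨ ((v : 𝓞 K) : K) = -((u : 𝓞 K) : K) ^ k)
    {E : ℝ} (hu : τ ((u : 𝓞 K) : K) ^ 2 = E) (hσu : τ (σ ((u : 𝓞 K) : K)) ^ 2 = E⁻¹) (a : K) :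
    (∀ v : (𝓞 K)ˣ, Algebra.trace ℚ K a ≤ Algebra.trace ℚ K (a * ((v : 𝓞 K) : K) ^ 2)) ↔
      ∀ k : ℤ, τ a + τ (σ a) ≤ τ a * E ^ k + τ (σ a) * (E ^ k)⁻¹ := by
  have htrτ (x : K) : (Algebra.trace ℚ K x : ℝ) = τ x + τ (σ x) := by
    simpa using congrArg τ (htr x)
  have hpow (k : ℤ) (v : (𝓞 K)ˣ)
      (hv : ((v : 𝓞 K) : K) = ((u : 𝓞 K) : K) ^ k ∨ ((v : 𝓞 K) : K) = -((u : 𝓞 K) : K) ^ k) :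
      Algebra.trace ℚ K a ≤ Algebra.trace ℚ K (a * ((v : 𝓞 K) : K) ^ 2) ↔
        τ a + τ (σ a) ≤ τ a * E ^ k + τ (σ a) * (E ^ k)⁻¹ := by
    have hv₂ : ((v : 𝓞 K) : K) ^ 2 = (((u : 𝓞 K) : K) ^ 2) ^ k := by
      rcases hv with hv | hv <;> rw [hv] <;> simp [sq, mul_zpow]
    rw [← Rat.cast_le (K := ℝ), htrτ, htrτ, hv₂]
    simp only [map_mul, map_zpow₀, map_pow, hu, hσu, inv_zpow]
  constructor
  · intro h k
    exact (hpow k (u ^ k) (.inl (NumberField.Units.coe_zpow u k))).mp (h _)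
  · intro h v
    obtain ⟨k, hk⟩ := hfund v
    exact (hpow k v hk).mpr (h k)

end NumberField

theorem stmt6_general (d : ℤ) (hd1 : 1 < d) (hdsf : Squarefree d)
    (K : Type*) [Field K] [NumberField K] (sq : K)
    (hsq : sq ^ 2 = (d : K)) (hdeg : finrank ℚ K = 2)
    -- a real embedding of `K`
    (τ₀ : K →+* ℝ)
    -- `u` is the fundamental unit: `u > 1` and `O_K^×` is generated by `u` and `-1`
    (u : (𝓞 K)ˣ) (hu1 : 1 < τ₀ ((u : 𝓞 K) : K))
    (hfund : ∀ v : (𝓞 K)ˣ, ∃ k : ℤ,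
      ((v : 𝓞 K) : K) = ((u : 𝓞 K) : K) ^ k ∨ ((v : 𝓞 K) : K) = -((u : 𝓞 K) : K) ^ k)
    -- `u² = u₁ + u₂√d` with `u₁, u₂ > 0` rational
    (u₁ u₂ : ℚ) (hu₂ : 0 < u₂)
    (husq : ((u : 𝓞 K) : K) ^ 2 = (u₁ : K) + (u₂ : K) * sq)
    -- a totally positive element `a = a₁ + a₂√d`
    (a : K) (a₁ a₂ : ℚ) (haK : a = (a₁ : K) + (a₂ : K) * sq) (ha : TotPos a) :
    (∀ v : (𝓞 K)ˣ,
        Algebra.trace ℚ K a ≤ Algebra.trace ℚ K (a * ((v : 𝓞 K) : K) ^ 2)) ↔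
      |a₂| / a₁ ≤ (u₁ - 1) / ((d : ℚ) * u₂) := by
  have hsq' : sq ^ 2 = algebraMap ℚ K d := by rw [hsq, map_intCast]
  obtain ⟨σ, hσ, htr⟩ := exists_algHom_apply_eq_neg_and_trace_eq_add hsq'
    (sq_ne_intCast_of_squarefree hdsf hd1.ne') hdeg
  set r := τ₀ sq
  have hr : r ^ 2 = d := by rw [← map_pow, hsq, map_intCast]
  have hτ (x₁ x₂ : ℚ) :
      τ₀ (x₁ + x₂ * sq) = x₁ + x₂ * r ∧ τ₀ (σ (x₁ + x₂ * sq)) = x₁ - x₂ * r := by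
    simp [hσ, r, sub_eq_add_neg]
  obtain ⟨hE, hF⟩ := hτ u₁ u₂
  obtain ⟨hP, hQ⟩ := hτ a₁ a₂
  rw [← husq, map_pow] at hE
  rw [← husq, map_pow, map_pow] at hF
  rw [← haK] at hP hQ
  have hEF : ((u₁ : ℝ) + u₂ * r) * (u₁ - u₂ * r) = 1 := by
    have hN : (u₁ : ℝ) ^ 2 - d * u₂ ^ 2 = 1 := by
      exact_mod_cast sq_sub_mul_sq_eq_one_of_unit_sq_eq σ.toRingHom τ₀ hsq' hσ u husq
    linear_combination hN - (u₂ : ℝ) ^ 2 * hr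
  have hE1 : 1 < (u₁ : ℝ) + u₂ * r := hE ▸ one_lt_pow₀ hu1 two_ne_zero
  have hPpos : 0 < τ₀ a := ha τ₀
  have hQpos : 0 < τ₀ (σ a) := ha (τ₀.comp σ.toRingHom)
  have ha₁ : 0 < a₁ := by exact_mod_cast (by linarith : (0 : ℝ) < a₁)
  have hdu₂ : (0 : ℚ) < d * u₂ := mul_pos (by exact_mod_cast hd1.trans' one_pos) hu₂
  rw [forall_trace_le_trace_mul_sq_iff σ.toRingHom τ₀ htr u hfund hE
      (hF.trans (eq_inv_of_mul_eq_one_right hEF)) a,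
    forall_add_le_mul_zpow_add_mul_zpow_inv_iff hPpos.le hE1]
  simp only [AlgHom.toRingHom_eq_coe, RingHom.coe_coe]
  rw [hP, hQ, le_mul_and_le_mul_iff_abs_le hEF hE1, hr, div_le_div_iff₀ ha₁ hdu₂,
    ← abs_of_pos hdu₂, ← abs_mul, mul_comm _ a₁, mul_comm (d : ℚ)]
  exact_mod_cast Iff.rfl

theorem stmt6 (d : ℤ) (hd1 : 1 < d) (hdsf : Squarefree d)
    (K : Type*) [Field K] [NumberField K] (sq : K)
    (hsq : sq ^ 2 = (d : K)) (hdeg : finrank ℚ K = 2)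
    -- a real embedding of `K`
    (τ₀ : K →+* ℝ)
    -- `u` is the fundamental unit: `u > 1` and `O_K^×` is generated by `u` and `-1`
    (u : (𝓞 K)ˣ) (hu1 : 1 < τ₀ ((u : 𝓞 K) : K))
    (hfund : ∀ v : (𝓞 K)ˣ, ∃ k : ℤ,
      ((v : 𝓞 K) : K) = ((u : 𝓞 K) : K) ^ k ∨ ((v : 𝓞 K) : K) = -((u : 𝓞 K) : K) ^ k)
    -- `u² = u₁ + u₂√d` with `u₁, u₂ > 0` rational
    (u₁ u₂ : ℚ) (hu₁ : 0 < u₁) (hu₂ : 0 < u₂)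
    (husq : ((u : 𝓞 K) : K) ^ 2 = (u₁ : K) + (u₂ : K) * sq)
    -- a totally positive element `a = a₁ + a₂√d`
    (a : K) (a₁ a₂ : ℚ) (haK : a = (a₁ : K) + (a₂ : K) * sq) (ha : TotPos a) :
    (∀ v : (𝓞 K)ˣ,
        Algebra.trace ℚ K a ≤ Algebra.trace ℚ K (a * ((v : 𝓞 K) : K) ^ 2)) ↔
      |a₂| / a₁ ≤ (u₁ - 1) / ((d : ℚ) * u₂) :=
  stmt6_general d hd1 hdsf K sq hsq hdeg τ₀ u hu1 hfund u₁ u₂ hu₂ husq a a₁ a₂ haK ha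
end

section
/- Let d > 1 be a squarefree integer, K = ℚ(√d) with regulator R_K. A totally positive element a = a₁ + a₂√d ∈ K (a₁, a₂ ∈ ℚ) is reduced, i.e., Tr(a) ≤ Tr(a v²) for all v ∈ O_K^×, if and only if |a₂|/a₁ ≤ tanh(R_K)/√d. -/
/-!
Let `σ₁, σ₂` be the two real embeddings of `K = ℚ(√d)`, so that `Tr x = σ₁ x + σ₂ x`,
`σ₁ a = a₁ + a₂√d` and `σ₂ a = a₁ - a₂√d`. The unit rank of `K` is one, hence as `v` runs over
the units, the pairs `(σ₁(v)², σ₂(v)²)` run exactly over `(U ^ n, U ^ (-n))`, `n ∈ ℤ`, with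
`U = exp (2 R_K)`. Reducedness thus says that `n ↦ α U ^ n + β U ^ (-n)` (`α = σ₁ a`, `β = σ₂ a`)
is minimal at `n = 0`. This function is convex in `n`, so it suffices to compare with `n = ±1`,
which gives `β ≤ α U` and `α ≤ β U`, that is `|α - β| ≤ tanh R_K · (α + β)`.
-/

open NumberField Module

open Real InfinitePlace Polynomial

theorem not_isSquare_intCast_of_squarefree {d : ℤ} (hd : Squarefree d) (hd1 : d ≠ 1) :
    ¬IsSquare (d : ℚ) := by
  rw [Rat.isSquare_intCast_iff]
  rintro ⟨r, rfl⟩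
  exact hd1 (Int.isUnit_mul_self (hd r dvd_rfl))

theorem abs_sub_le_mul_add_iff_abs_div_le {a₁ a₂ s T : ℝ} (ha₁ : 0 < a₁) (hs : 0 < s) :
    |a₁ + a₂ * s - (a₁ - a₂ * s)| ≤ T * (a₁ + a₂ * s + (a₁ - a₂ * s)) ↔
      |a₂| / a₁ ≤ T / s := by
  rw [div_le_div_iff₀ ha₁ hs, show a₁ + a₂ * s - (a₁ - a₂ * s) = 2 * (a₂ * s) by ring,
    abs_mul, abs_mul, abs_two, abs_of_pos hs]
  constructor <;> intro h <;> linarith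

theorem add_le_mul_add_mul_inv {α β x : ℝ} (hx : 1 ≤ x) (h : β ≤ α * x) :
    α + β ≤ α * x + β * x⁻¹ := by
  have hx0 : 0 < x := zero_lt_one.trans_le hx
  have hfactor : α * x + β * x⁻¹ - (α + β) = (x - 1) * (α * x - β) * x⁻¹ := by
    field_simp
    ring
  have hnonneg : 0 ≤ (x - 1) * (α * x - β) * x⁻¹ :=
    mul_nonneg (mul_nonneg (sub_nonneg.2 hx) (sub_nonneg.2 h)) (inv_nonneg.2 hx0.le)
  linarith

theorem add_le_mul_pow_add_mul_pow_inv {α β U : ℝ} (hα : 0 ≤ α) (hU : 1 ≤ U)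
    (h : β ≤ α * U) (m : ℕ) : α + β ≤ α * U ^ m + β * (U ^ m)⁻¹ := by
  rcases m.eq_zero_or_pos with rfl | hm
  · simp
  refine add_le_mul_add_mul_inv (one_le_pow₀ hU) (h.trans ?_)
  exact mul_le_mul_of_nonneg_left (le_self_pow₀ hU hm.ne') hα

theorem forall_add_le_mul_zpow_add_mul_zpow_neg_iff {α β U : ℝ} (hα : 0 < α) (hβ : 0 < β)
    (hU : 1 < U) :
    (∀ n : ℤ, α + β ≤ α * U ^ n + β * U ^ (-n)) ↔ β ≤ α * U ∧ α ≤ β * U := by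
  have hU0 : 0 < U := zero_lt_one.trans hU
  constructor
  · intro h
    have h₁ := h 1
    have h₂ := h (-1)
    simp only [zpow_one, zpow_neg, neg_neg] at h₁ h₂
    constructor
    · nlinarith [mul_le_mul_of_nonneg_right h₁ hU0.le, mul_inv_cancel₀ hU0.ne']
    · nlinarith [mul_le_mul_of_nonneg_right h₂ hU0.le, mul_inv_cancel₀ hU0.ne']
  · rintro ⟨h₁, h₂⟩ n
    obtain ⟨m, rfl | rfl⟩ := n.eq_nat_or_neg
    · simpa using add_le_mul_pow_add_mul_pow_inv hα.le hU.le h₁ m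
    · simpa [add_comm] using add_le_mul_pow_add_mul_pow_inv hβ.le hU.le h₂ m

theorem le_mul_exp_and_le_mul_exp_iff {α β R : ℝ} :
    β ≤ α * exp (2 * R) ∧ α ≤ β * exp (2 * R) ↔ |α - β| ≤ tanh R * (α + β) := by
  have htanh : tanh R = (exp (2 * R) - 1) / (exp (2 * R) + 1) := by
    rw [tanh_eq, two_mul, exp_add, exp_neg]
    field_simp
  have hpos : 0 < exp (2 * R) + 1 := by positivity
  rw [htanh, div_mul_eq_mul_div, le_div_iff₀ hpos, ← abs_of_pos hpos, ← abs_mul, abs_le]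
  constructor <;> rintro ⟨h₁, h₂⟩ <;> constructor <;> linarith

theorem Real.range_zpow_eq_range_zpow_exp_abs_log {t : ℝ} (ht : 0 < t) :
    Set.range (fun n : ℤ ↦ t ^ n) = Set.range (fun n : ℤ ↦ exp |log t| ^ n) := by
  rcases abs_choice (log t) with h | h <;> rw [h]
  · rw [exp_log ht]
  · ext x
    constructor <;> rintro ⟨n, rfl⟩ <;> exact ⟨-n, by simp [exp_neg, exp_log ht]⟩

namespace NumberField.Units

variable {K : Type*} [Field K] [NumberField K]

theorem card_infinitePlace_of_rank_eq_one (hK : rank K = 1) :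
    Fintype.card (InfinitePlace K) = 2 := by
  have := Fintype.card_pos (α := InfinitePlace K)
  rw [rank] at hK
  omega

theorem eq_or_eq_of_rank_eq_one (hK : rank K = 1) {w w' : InfinitePlace K} (h : w ≠ w')
    (u : InfinitePlace K) : u = w ∨ u = w' := by
  classical
  have huniv : ({w, w'} : Finset (InfinitePlace K)) = Finset.univ :=
    Finset.eq_univ_of_card _ (by rw [Finset.card_pair h, card_infinitePlace_of_rank_eq_one hK])
  have hu := Finset.mem_univ u
  rw [← huniv] at hu
  simpa using hu

theorem exists_ne_of_rank_eq_one (hK : rank K = 1) (w : InfinitePlace K) :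
    ∃ w', w ≠ w' :=
  Fintype.exists_ne_of_one_lt_card (by rw [card_infinitePlace_of_rank_eq_one hK]; norm_num) w
    |>.imp fun _ h ↦ h.symm

theorem pow_mult_eq_inv_of_rank_eq_one (hK : rank K = 1) {w w' : InfinitePlace K} (h : w ≠ w')
    (v : (𝓞 K)ˣ) : w' v ^ mult w' = (w v ^ mult w)⁻¹ := by
  classical
  have hprod := prod_eq_abs_norm (v : K)
  rw [Units.norm, ← Finset.prod_subset (Finset.subset_univ {w, w'}) (fun u _ hu ↦ by
    rcases eq_or_eq_of_rank_eq_one hK h u with rfl | rfl <;> simp at hu),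
    Finset.prod_pair h] at hprod
  exact eq_inv_of_mul_eq_one_right (by exact_mod_cast hprod)

theorem exists_eq_fundSystem_zpow_of_rank_eq_one (hK : rank K = 1) (i : Fin (rank K))
    (w : InfinitePlace K) (v : (𝓞 K)ˣ) : ∃ n : ℤ, w v = w (fundSystem K i) ^ n := by
  have : Subsingleton (Fin (rank K)) := Fin.subsingleton_iff_le_one.2 hK.le
  obtain ⟨⟨ζ, e⟩, hv, -⟩ := exist_unique_eq_mul_prod K v
  refine ⟨e i, ?_⟩
  rw [hv, Fintype.prod_subsingleton _ i, coe_mul, map_mul, (mem_torsion K).1 ζ.2 w, one_mul,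
    coe_zpow, map_zpow₀]

theorem regulator_eq_abs_log_of_rank_eq_one (hK : rank K = 1) (i : Fin (rank K))
    (w : InfinitePlace K) : regulator K = |log (w (fundSystem K i) ^ mult w)| := by
  classical
  obtain ⟨w', h⟩ := exists_ne_of_rank_eq_one hK w
  let : Unique {u // u ≠ w'} :=
    ⟨⟨⟨w, h⟩⟩, fun u ↦
      Subtype.ext ((eq_or_eq_of_rank_eq_one hK h u).resolve_right u.2)⟩
  have : Subsingleton (Fin (rank K)) := Fin.subsingleton_iff_le_one.2 hK.le
  have : Unique (Fin (rank K)) := uniqueOfSubsingleton i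
  rw [regulator_eq_det K w' (Equiv.ofUnique _ _), Matrix.det_unique, Real.log_pow]
  simp only [Matrix.of_apply, Subsingleton.elim _ i]
  rfl

theorem range_pow_mult_eq_of_rank_eq_one (hK : rank K = 1) (w : InfinitePlace K) :
    Set.range (fun v : (𝓞 K)ˣ ↦ w v ^ mult w) =
      Set.range (fun n : ℤ ↦ exp (regulator K) ^ n) := by
  have i : Fin (rank K) := ⟨0, by omega⟩
  set t := w (fundSystem K i) ^ mult w
  have ht : 0 < t := pow_pos (pos_at_place _ w) _
  have hrange :
      Set.range (fun v : (𝓞 K)ˣ ↦ w v ^ mult w) = Set.range (fun n : ℤ ↦ t ^ n) := by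
    ext x
    constructor
    · rintro ⟨v, rfl⟩
      obtain ⟨n, hn⟩ := exists_eq_fundSystem_zpow_of_rank_eq_one hK i w v
      exact ⟨n, by simp only [t, hn, ← zpow_natCast, ← zpow_mul, mul_comm]⟩
    · rintro ⟨n, rfl⟩
      exact ⟨fundSystem K i ^ n, by
        simp only [t, coe_zpow, map_zpow₀, ← zpow_natCast, ← zpow_mul, mul_comm]⟩
  rw [hrange, range_zpow_eq_range_zpow_exp_abs_log ht, regulator_eq_abs_log_of_rank_eq_one hK i]

end NumberField.Units

noncomputable def PowerBasis.ofNatDegreeMinpolyEqFinrank {F S : Type*} [Field F] [CommRing S]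
    [Algebra F S] [FiniteDimensional F S] {x : S}
    (h : (minpoly F x).natDegree = Module.finrank F S) :
    PowerBasis F S where
  gen := x
  dim := (minpoly F x).natDegree
  basis := basisOfLinearIndependentOfCardEqFinrank' _ (linearIndependent_pow x) (by simpa using h)
  basis_eq_pow _ := by simp

theorem minpoly_eq_X_sq_sub_C_s7 {F K : Type*} [Field F] [Field K] [Algebra F K] {d : F} {x : K}
    (hx : x ^ 2 = algebraMap F K d) (hd : ¬IsSquare d) : minpoly F x = X ^ 2 - C d :=
  (minpoly.eq_of_irreducible_of_monic
    (X_pow_sub_C_irreducible_of_prime Nat.prime_two fun b hb ↦ hd ⟨b, by rw [← hb, sq]⟩)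
    (by simp [hx]) (monic_X_pow_sub_C _ two_ne_zero)).symm

namespace PowerBasis

variable {K L : Type*} [Field K] [CharZero K] [Field L] [CharZero L] {d : ℚ}
  {pb : PowerBasis ℚ K}

theorem exists_ringHom_apply_gen_eq (hpb : minpoly ℚ pb.gen = X ^ 2 - C d) {y : L}
    (hy : y ^ 2 = d) : ∃ f : K →+* L, f pb.gen = y := by
  have hroot : aeval y (minpoly ℚ pb.gen) = 0 := by simp [hpb, hy]
  exact ⟨pb.lift y hroot, pb.lift_gen y hroot⟩

theorem ringHom_ext {φ ψ : K →+* L} (h : φ pb.gen = ψ pb.gen) : φ = ψ := by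
  have := pb.algHom_ext (f := φ.toRatAlgHom) (g := ψ.toRatAlgHom) h
  ext x
  exact DFunLike.congr_fun this x

theorem gen_sq_of_minpoly_eq (hpb : minpoly ℚ pb.gen = X ^ 2 - C d) : pb.gen ^ 2 = (d : K) := by
  have := minpoly.aeval ℚ pb.gen
  rw [hpb] at this
  simpa [sub_eq_zero] using this

theorem eq_or_eq_of_minpoly_eq_X_sq_sub_C (hpb : minpoly ℚ pb.gen = X ^ 2 - C d)
    {f g : K →+* L} (hfg : g pb.gen = -f pb.gen) (φ : K →+* L) : φ = f ∨ φ = g := by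
  have hφ : φ pb.gen ^ 2 = f pb.gen ^ 2 := by
    rw [← map_pow, ← map_pow, gen_sq_of_minpoly_eq hpb, map_ratCast, map_ratCast]
  rcases sq_eq_sq_iff_eq_or_eq_neg.1 hφ with h | h
  · exact .inl (ringHom_ext h)
  · exact .inr (ringHom_ext (h.trans hfg.symm))

theorem trace_eq_add_of_minpoly_eq_X_sq_sub_C (hpb : minpoly ℚ pb.gen = X ^ 2 - C d)
    {f g : K →+* L} (hfg : g pb.gen = -f pb.gen) (z : K) :
    (Algebra.trace ℚ K z : L) = f z + g z := by
  have hdim : pb.dim = 2 := by rw [← pb.natDegree_minpoly, hpb, natDegree_X_pow_sub_C]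
  have := pb.basis.ext (f₁ := (Algebra.linearMap ℚ L).comp (Algebra.trace ℚ K))
    (f₂ := f.toRatAlgHom.toLinearMap + g.toRatAlgHom.toLinearMap) fun i ↦ by
    obtain ⟨i, hi⟩ := i
    rw [hdim] at hi
    simp only [LinearMap.comp_apply, Algebra.linearMap_apply, LinearMap.add_apply,
      AlgHom.toLinearMap_apply, RingHom.toRatAlgHom_apply, pb.basis_eq_pow]
    interval_cases i
    · rw [pow_zero, ← map_one (algebraMap ℚ K), Algebra.trace_algebraMap, pb.finrank, hdim]
      simp [one_add_one_eq_two]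
    · rw [pow_one, pb.trace_gen_eq_nextCoeff_minpoly, hpb,
        nextCoeff_of_natDegree_pos (by simp), natDegree_X_pow_sub_C]
      simp [hfg]
  simpa using DFunLike.congr_fun this z

end PowerBasis

namespace NumberField.InfinitePlace

variable {K : Type*} [Field K]

noncomputable def ofRealEmbedding (f : K →+* ℝ) : InfinitePlace K :=
  mk (Complex.ofRealHom.comp f)

theorem ofRealEmbedding_apply (f : K →+* ℝ) (x : K) : ofRealEmbedding f x = |f x| := by
  simp [ofRealEmbedding, apply]

theorem isReal_ofRealEmbedding (f : K →+* ℝ) : IsReal (ofRealEmbedding f) := by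
  refine isReal_mk_iff.2 (ComplexEmbedding.isReal_iff.2 ?_)
  ext x
  simp [ComplexEmbedding.conjugate_coe_eq]

theorem ofRealEmbedding_inj {f g : K →+* ℝ} :
    ofRealEmbedding f = ofRealEmbedding g ↔ f = g := by
  refine ⟨fun h ↦ ?_, congrArg _⟩
  rw [ofRealEmbedding, ofRealEmbedding, mk_eq_iff,
    ComplexEmbedding.isReal_iff.1 (isReal_mk_iff.1 (isReal_ofRealEmbedding f)), or_self] at h
  ext x
  exact Complex.ofReal_injective (DFunLike.congr_fun h x)

theorem ofRealEmbedding_ne_of_apply_eq_neg {f g : K →+* ℝ} {x : K} (hfg : g x = -f x)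
    (hf : f x ≠ 0) :
    ofRealEmbedding f ≠ ofRealEmbedding g := by
  rw [Ne, ofRealEmbedding_inj]
  rintro rfl
  exact hf (CharZero.eq_neg_self_iff.1 hfg)

end NumberField.InfinitePlace

section RealQuadratic

variable {K : Type*} [Field K] [NumberField K] {d : ℚ} {pb : PowerBasis ℚ K} {f g : K →+* ℝ}

theorem eq_ofRealEmbedding_or_eq_ofRealEmbedding (hpb : minpoly ℚ pb.gen = X ^ 2 - C d)
    (hfg : g pb.gen = -f pb.gen) (w : InfinitePlace K) :
    w = ofRealEmbedding f ∨ w = ofRealEmbedding g := by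
  have hfg' : (Complex.ofRealHom.comp g) pb.gen = -(Complex.ofRealHom.comp f) pb.gen := by
    simp [hfg]
  rw [← mk_embedding w]
  exact (pb.eq_or_eq_of_minpoly_eq_X_sq_sub_C hpb hfg' w.embedding).imp (congrArg _) (congrArg _)

theorem rank_eq_one_of_minpoly_eq_X_sq_sub_C (hpb : minpoly ℚ pb.gen = X ^ 2 - C d)
    (hfg : g pb.gen = -f pb.gen) (hf : f pb.gen ≠ 0) : Units.rank K = 1 := by
  classical
  have hne := ofRealEmbedding_ne_of_apply_eq_neg hfg hf
  have huniv : {ofRealEmbedding f, ofRealEmbedding g} = (Finset.univ : Finset (InfinitePlace K)) :=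
    Finset.eq_univ_of_forall fun w ↦ by
      simpa using eq_ofRealEmbedding_or_eq_ofRealEmbedding hpb hfg w
  rw [Units.rank, ← Finset.card_univ, ← huniv, Finset.card_pair hne]

theorem range_sq_units_of_minpoly_eq_X_sq_sub_C (hpb : minpoly ℚ pb.gen = X ^ 2 - C d)
    (hfg : g pb.gen = -f pb.gen) (hf : f pb.gen ≠ 0) :
    Set.range (fun v : (𝓞 K)ˣ ↦ (f v ^ 2, g v ^ 2)) =
      Set.range (fun n : ℤ ↦ (exp (2 * Units.regulator K) ^ n,
        exp (2 * Units.regulator K) ^ (-n))) := by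
  have hK := rank_eq_one_of_minpoly_eq_X_sq_sub_C hpb hfg hf
  have hne := ofRealEmbedding_ne_of_apply_eq_neg hfg hf
  have hm₁ := (isReal_ofRealEmbedding f).mult_eq_one
  have hpair : (fun v : (𝓞 K)ˣ ↦ (f v ^ 2, g v ^ 2)) =
      (fun t : ℝ ↦ (t ^ 2, t⁻¹ ^ 2)) ∘
        fun v : (𝓞 K)ˣ ↦ ofRealEmbedding f v ^ mult (ofRealEmbedding f) := by
    funext v
    have hinv := Units.pow_mult_eq_inv_of_rank_eq_one hK hne v
    rw [hm₁, (isReal_ofRealEmbedding g).mult_eq_one, pow_one, pow_one] at hinv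
    simp only [Function.comp_apply, hm₁, pow_one, ofRealEmbedding_apply, sq_abs]
    rw [← sq_abs (g _), ← ofRealEmbedding_apply g, hinv, ofRealEmbedding_apply]
  rw [hpair, Set.range_comp, Units.range_pow_mult_eq_of_rank_eq_one hK, ← Set.range_comp]
  congr 1
  funext n
  simp only [Function.comp, two_mul, exp_add, ← sq, ← zpow_natCast, ← zpow_mul, inv_zpow',
    mul_comm, neg_mul, mul_neg]

theorem forall_trace_le_trace_mul_sq_iff_s7 (hpb : minpoly ℚ pb.gen = X ^ 2 - C d)
    (hfg : g pb.gen = -f pb.gen) (hf : f pb.gen ≠ 0) (a : K) :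
    (∀ v : (𝓞 K)ˣ, Algebra.trace ℚ K a ≤ Algebra.trace ℚ K (a * (v : K) ^ 2)) ↔
      ∀ n : ℤ, f a + g a ≤
        f a * exp (2 * Units.regulator K) ^ n + g a * exp (2 * Units.regulator K) ^ (-n) := by
  have htr := pb.trace_eq_add_of_minpoly_eq_X_sq_sub_C hpb hfg
  calc (∀ v : (𝓞 K)ˣ, Algebra.trace ℚ K a ≤ Algebra.trace ℚ K (a * (v : K) ^ 2))
      ↔ ∀ v : (𝓞 K)ˣ, f a + g a ≤ f a * f v ^ 2 + g a * g v ^ 2 :=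
        forall_congr' fun v ↦ by
          rw [← Rat.cast_le (K := ℝ), htr, htr, map_mul, map_mul, map_pow, map_pow]
    _ ↔ ∀ p ∈ Set.range (fun v : (𝓞 K)ˣ ↦ (f v ^ 2, g v ^ 2)),
        f a + g a ≤ f a * p.1 + g a * p.2 := by simp only [Set.forall_mem_range]
    _ ↔ _ := by rw [range_sq_units_of_minpoly_eq_X_sq_sub_C hpb hfg hf, Set.forall_mem_range]

end RealQuadratic

theorem stmt7 (d : ℤ) (hd1 : 1 < d) (hdsf : Squarefree d)
    (K : Type*) [Field K] [NumberField K] (sq : K)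
    (hsq : sq ^ 2 = (d : K)) (hdeg : finrank ℚ K = 2)
    -- a totally positive element `a = a₁ + a₂√d`
    (a : K) (a₁ a₂ : ℚ) (haK : a = (a₁ : K) + (a₂ : K) * sq) (ha : TotPos a) :
    (∀ v : (𝓞 K)ˣ,
        Algebra.trace ℚ K a ≤ Algebra.trace ℚ K (a * ((v : 𝓞 K) : K) ^ 2)) ↔
      ((|a₂| / a₁ : ℚ) : ℝ) ≤ Real.tanh (Units.regulator K) / Real.sqrt (d : ℝ) := by
  have hmin : minpoly ℚ sq = X ^ 2 - C (d : ℚ) :=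
    minpoly_eq_X_sq_sub_C_s7 (by simpa using hsq) (not_isSquare_intCast_of_squarefree hdsf hd1.ne')
  obtain ⟨pb, rfl⟩ : ∃ pb : PowerBasis ℚ K, pb.gen = sq :=
    ⟨.ofNatDegreeMinpolyEqFinrank (by rw [hmin, natDegree_X_pow_sub_C, hdeg]), rfl⟩
  have hd0 : (0 : ℝ) < d := by exact_mod_cast one_pos.trans hd1
  have hs : 0 < √(d : ℝ) := sqrt_pos.2 hd0
  obtain ⟨f, hf⟩ := pb.exists_ringHom_apply_gen_eq hmin (y := √(d : ℝ)) (by simp [hd0.le])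
  obtain ⟨g, hg⟩ := pb.exists_ringHom_apply_gen_eq hmin (y := -√(d : ℝ)) (by simp [hd0.le])
  have hfa : f a = a₁ + a₂ * √(d : ℝ) := by simp [haK, hf]
  have hga : g a = a₁ - a₂ * √(d : ℝ) := by simp [haK, hg, sub_eq_add_neg]
  have hfg : g pb.gen = -f pb.gen := by rw [hf, hg]
  rw [forall_trace_le_trace_mul_sq_iff_s7 hmin hfg (hf ▸ hs.ne'),
    forall_add_le_mul_zpow_add_mul_zpow_neg_iff (ha f) (ha g)
      (one_lt_exp_iff.2 (mul_pos two_pos (Units.regulator_pos K))),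
    le_mul_exp_and_le_mul_exp_iff, hfa, hga, Rat.cast_div, Rat.cast_abs]
  exact abs_sub_le_mul_add_iff_abs_div_le (by linarith [ha f, ha g]) hs
end

section
/- Let K be a totally real number field with ring of integers O_K, and let S ⊆ O_K^× be a set of units such that the set {a ∈ K totally positive : Tr(a) ≤ Tr(a u²) for all u ∈ S} coincides with the reduction domain F_K = {a ∈ K totally positive : Tr(a) ≤ Tr(a v²) for all v ∈ O_K^×}. Then the subgroup of O_K^× generated by S together with −1 is all of O_K^×. -/
/-!
Fix a unit `w` and let `H` be the subgroup generated by `S` and `-1`. Among the units `v ∈ w⁻¹H`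
choose one for which the integer `Tr(v²) > 0` is minimal. Then `Tr(v²) ≤ Tr(v² u²)` for every
`u ∈ S`, so `v²` lies in the domain cut out by `S`, which by hypothesis is `F_K`. Testing the
defining inequality of `F_K` against `u = v⁻¹` gives `Tr(v²) ≤ Tr(1) = n`. The conjugates of `v²`
are positive reals with product `N(v)² = 1` and sum at most `n`, so by the equality case of AM-GM
they all equal `1`. Hence `v = ±1` and `w ∈ H`.
-/

open NumberField Module

theorem eq_one_of_prod_eq_one_of_sum_le_card {ι : Type*} [Fintype ι] {r : ι → ℝ}
    (hpos : ∀ i, 0 < r i) (hprod : ∏ i, r i = 1) (hsum : ∑ i, r i ≤ Fintype.card ι) (i : ι) :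
    r i = 1 := by
  by_contra hi
  -- `log t ≤ t - 1`, strictly unless `t = 1`, and the logarithms sum to `log 1 = 0`.
  have hlog : ∑ j, Real.log (r j) = 0 := by
    rw [← Real.log_prod fun j _ => (hpos j).ne', hprod, Real.log_one]
  have hlt : ∑ j, Real.log (r j) < ∑ j, (r j - 1) :=
    Finset.sum_lt_sum (fun j _ => Real.log_le_sub_one_of_pos (hpos j))
      ⟨i, Finset.mem_univ i, Real.log_lt_sub_one_of_pos (hpos i) hi⟩
  rw [Finset.sum_sub_distrib, Finset.sum_const, Finset.card_univ, nsmul_one] at hlt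
  linarith

theorem Int.exists_isMinOn_of_bddBelow {α : Type*} {f : α → ℤ} {s : Set α} (hs : s.Nonempty)
    (hf : BddBelow (f '' s)) : ∃ a ∈ s, IsMinOn f s a := by
  obtain ⟨a, ha, hfa⟩ := Int.csInf_mem (hs.image f) hf
  exact ⟨a, ha, fun b hb => hfa ▸ csInf_le hf ⟨b, hb, rfl⟩⟩

theorem totPos_sq {K : Type*} [Field K] {x : K} (hx : x ≠ 0) : TotPos (x ^ 2) := fun τ => by
  rw [map_pow]
  exact pow_two_pos_of_ne_zero ((map_ne_zero τ).mpr hx)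

theorem isTotallyReal_of_forall_im_eq_zero {K : Type*} [Field K]
    (htr : ∀ φ : K →+* ℂ, ∀ x : K, (φ x).im = 0) : IsTotallyReal K :=
  ⟨fun _ => InfinitePlace.isReal_iff.mpr <| ComplexEmbedding.isReal_iff.mpr <|
    RingHom.ext fun x => Complex.conj_eq_iff_im.mpr (htr _ x)⟩

section TotallyReal

variable {K : Type*} [Field K] [IsTotallyReal K]

theorem IsTotallyReal.ofReal_re_apply (φ : K →+* ℂ) (x : K) : ((φ x).re : ℂ) = φ x :=
  (IsTotallyReal.complexEmbedding_isReal φ).coe_embedding_apply x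

theorem TotPos.re_pos {x : K} (hx : TotPos x) (φ : K →+* ℂ) : 0 < (φ x).re :=
  hx (IsTotallyReal.complexEmbedding_isReal φ).embedding

variable [NumberField K]

theorem IsTotallyReal.trace_eq_sum_re (x : K) :
    (Algebra.trace ℚ K x : ℝ) = ∑ φ : K →+* ℂ, (φ x).re := by
  have h := trace_eq_sum_embeddings (K := ℚ) ℂ (x := x)
  rw [← Fintype.sum_equiv (RingHom.equivRatAlgHom K ℂ) (fun φ => φ x) _ fun _ => rfl,
    eq_ratCast] at h
  exact_mod_cast h.trans <|
    Finset.sum_congr rfl fun φ _ => (IsTotallyReal.ofReal_re_apply φ x).symm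

theorem IsTotallyReal.norm_eq_prod_re (x : K) :
    (Algebra.norm ℚ x : ℝ) = ∏ φ : K →+* ℂ, (φ x).re := by
  have h := Algebra.norm_eq_prod_embeddings ℚ ℂ x
  rw [← Fintype.prod_equiv (RingHom.equivRatAlgHom K ℂ) (fun φ => φ x) _ fun _ => rfl,
    eq_ratCast] at h
  exact_mod_cast h.trans <|
    Finset.prod_congr rfl fun φ _ => (IsTotallyReal.ofReal_re_apply φ x).symm

theorem TotPos.trace_pos {x : K} (hx : TotPos x) : 0 < Algebra.trace ℚ K x := by
  have h : (0 : ℝ) < Algebra.trace ℚ K x := by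
    rw [IsTotallyReal.trace_eq_sum_re]
    exact Finset.sum_pos (fun φ _ => hx.re_pos φ) Finset.univ_nonempty
  exact_mod_cast h

theorem TotPos.eq_one_of_norm_eq_one_of_trace_le {x : K} (hx : TotPos x)
    (hN : Algebra.norm ℚ x = 1) (hT : Algebra.trace ℚ K x ≤ finrank ℚ K) : x = 1 := by
  have hre : ∀ φ : K →+* ℂ, (φ x).re = 1 := by
    refine eq_one_of_prod_eq_one_of_sum_le_card hx.re_pos ?_ ?_
    · rw [← IsTotallyReal.norm_eq_prod_re, hN, Rat.cast_one]
    · rw [← IsTotallyReal.trace_eq_sum_re, Embeddings.card K ℂ]; exact_mod_cast hT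
  obtain ⟨φ⟩ : Nonempty (K →+* ℂ) := inferInstance
  apply φ.injective
  rw [← IsTotallyReal.ofReal_re_apply, hre φ, map_one, Complex.ofReal_one]

theorem Units.eq_one_or_eq_neg_one_of_forall_trace_le (v : (𝓞 K)ˣ)
    (h : ∀ u : (𝓞 K)ˣ, Algebra.trace ℚ K (((v : 𝓞 K) : K) ^ 2) ≤
      Algebra.trace ℚ K (((v : 𝓞 K) : K) ^ 2 * ((u : 𝓞 K) : K) ^ 2)) :
    v = 1 ∨ v = -1 := by
  have hT : Algebra.trace ℚ K (((v : 𝓞 K) : K) ^ 2) ≤ finrank ℚ K := by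
    have hv : ((v : 𝓞 K) : K) ^ 2 * (((v⁻¹ : (𝓞 K)ˣ) : 𝓞 K) : K) ^ 2 = algebraMap ℚ K 1 := by
      rw [← mul_pow, ← map_mul, Units.mul_inv, map_one, map_one, one_pow]
    simpa only [hv, Algebra.trace_algebraMap, nsmul_eq_mul, mul_one] using h v⁻¹
  have hN : Algebra.norm ℚ (((v : 𝓞 K) : K) ^ 2) = 1 := by
    rw [map_pow, ← sq_abs, ← RingOfIntegers.coe_norm, isUnit_iff_norm.mp v.isUnit, one_pow]
  have hsq := (totPos_sq (by simp)).eq_one_of_norm_eq_one_of_trace_le hN hT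
  rw [← Units.val_eq_one, ← Units.val_inj, Units.val_neg, Units.val_one, ← sq_eq_one_iff]
  exact_mod_cast hsq

theorem Subgroup.exists_mem_forall_trace_sq_le (H : Subgroup (𝓞 K)ˣ) (w : (𝓞 K)ˣ) :
    ∃ h ∈ H, ∀ u ∈ H, Algebra.trace ℚ K ((((w * h : (𝓞 K)ˣ) : 𝓞 K) : K) ^ 2) ≤
      Algebra.trace ℚ K ((((w * h : (𝓞 K)ˣ) : 𝓞 K) : K) ^ 2 * ((u : 𝓞 K) : K) ^ 2) := by
  -- Minimise over `H` the trace of `(w h)²`, which is a positive integer.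
  let t : (𝓞 K)ˣ → ℤ := fun u => Algebra.trace ℤ (𝓞 K) (((w * u : (𝓞 K)ˣ) : 𝓞 K) ^ 2)
  have ht : ∀ u, (t u : ℚ) = Algebra.trace ℚ K ((((w * u : (𝓞 K)ˣ) : 𝓞 K) : K) ^ 2) := fun u => by
    simp only [t, Algebra.coe_trace_int, map_pow]
  have hbdd : BddBelow (t '' H) := by
    refine ⟨0, ?_⟩
    rintro _ ⟨u, -, rfl⟩
    have hpos : (0 : ℚ) < t u := ht u ▸ (totPos_sq (by simp)).trace_pos
    exact_mod_cast hpos.le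
  obtain ⟨h, hH, hmin⟩ := Int.exists_isMinOn_of_bddBelow ⟨1, H.one_mem⟩ hbdd
  refine ⟨h, hH, fun u hu => ?_⟩
  have hmul : (((w * h : (𝓞 K)ˣ) : 𝓞 K) : K) ^ 2 * ((u : 𝓞 K) : K) ^ 2 =
      (((w * (h * u) : (𝓞 K)ˣ) : 𝓞 K) : K) ^ 2 := by
    push_cast; ring
  rw [hmul, ← ht, ← ht]
  exact_mod_cast hmin (H.mul_mem hH hu)

end TotallyReal

theorem stmt11 (K : Type*) [Field K] [NumberField K]
    -- `K` is totally real
    (htr : ∀ φ : K →+* ℂ, ∀ x : K, (φ x).im = 0)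
    (S : Set (𝓞 K)ˣ)
    -- the inequalities indexed by `S` cut out exactly the reduction domain `F_K`
    (hS : {a : K | TotPos a ∧ ∀ u ∈ S,
            Algebra.trace ℚ K a ≤ Algebra.trace ℚ K (a * ((u : 𝓞 K) : K) ^ 2)} =
          {a : K | TotPos a ∧ ∀ v : (𝓞 K)ˣ,
            Algebra.trace ℚ K a ≤ Algebra.trace ℚ K (a * ((v : 𝓞 K) : K) ^ 2)}) :
    Subgroup.closure (S ∪ {-1}) = (⊤ : Subgroup (𝓞 K)ˣ) := by
  have := isTotallyReal_of_forall_im_eq_zero htr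
  set H := Subgroup.closure (S ∪ {-1})
  refine (Subgroup.eq_top_iff' H).mpr fun w => ?_
  obtain ⟨h, hH, hred⟩ := H.exists_mem_forall_trace_sq_le w⁻¹
  have hF : (((w⁻¹ * h : (𝓞 K)ˣ) : 𝓞 K) : K) ^ 2 ∈ {a : K | TotPos a ∧ ∀ v : (𝓞 K)ˣ,
      Algebra.trace ℚ K a ≤ Algebra.trace ℚ K (a * ((v : 𝓞 K) : K) ^ 2)} :=
    hS ▸ ⟨totPos_sq (by simp), fun u hu => hred u (Subgroup.subset_closure (Or.inl hu))⟩
  have hw : w = h * (w⁻¹ * h)⁻¹ := by group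
  rcases (w⁻¹ * h).eq_one_or_eq_neg_one_of_forall_trace_le hF.2 with hv | hv <;>
    rw [hw, hv]
  · simpa using hH
  · exact H.mul_mem hH (H.inv_mem (Subgroup.subset_closure (Or.inr rfl)))
end

section
/- Let d > 1 be a squarefree integer with d ≡ 1 (mod 4) and d = m² + r of Richaud–Degert type with m ≥ 2 odd (−m < r ≤ m, r | 4m). Set a = 2md + (m² + d − 4)√d ∈ K = ℚ(√d). Then a is totally positive, the minimum of Tr(a x²) over nonzero x ∈ O_K = ℤ[(1+√d)/2] is attained at ±1 and ±(m − √d)/2, and a is a perfect unary form. -/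
open NumberField Module

section helpers

-- helper: q = 1 case
lemma key1 (d m r : ℤ) (hm3 : 3 ≤ m) (hRD : d = m ^ 2 + r) (hr1 : -m < r) (hr2 : r ≤ m)
    (n : ℤ) (hmn : m = 2 * n + 1) (s : ℤ) :
    4 * m ≤ m * (2 * s + 1) ^ 2 + (m ^ 2 + d - 4) * (2 * s + 1) + m * d := by
  have hid : m * (2 * s + 1) ^ 2 + (m ^ 2 + d - 4) * (2 * s + 1) + m * d - 4 * m
      = 4 * m * (s + n + 1) ^ 2 + 2 * (s + n + 1) * (r - 4) := by
    subst hRD hmn; ring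
  set j := s + n + 1 with hj
  rcases lt_trichotomy j 0 with h | h | h
  · have f1 : 0 ≤ m * (j ^ 2 + j) := by
      have : 0 ≤ (-j) * (-j - 1) := mul_nonneg (by omega) (by omega)
      nlinarith [this]
    have f2 : 0 ≤ (-j) * (4 * m - 2 * r + 8) := mul_nonneg (by omega) (by omega)
    nlinarith [hid, f1, f2]
  · simp [h] at hid; omega
  · have f1 : 0 ≤ m * (j ^ 2 - j) := by
      have : 0 ≤ j * (j - 1) := mul_nonneg (by omega) (by omega)
      nlinarith [this]
    have f2 : 0 ≤ j * (4 * m + 2 * r - 8) := mul_nonneg (by omega) (by omega)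
    nlinarith [hid, f1, f2]

lemma keyQ (d m r : ℤ) (hm3 : 3 ≤ m) (hRD : d = m ^ 2 + r) (hr1 : -m < r) (hr2 : r ≤ m)
    (n : ℤ) (hmn : m = 2 * n + 1) (s t : ℤ) (h : ¬(s = 0 ∧ t = 0)) :
    4 * m ≤ m * (2 * s + t) ^ 2 + (m ^ 2 + d - 4) * (2 * s + t) * t + m * d * t ^ 2 := by
  by_cases ht0 : t = 0
  · subst ht0
    have hs : s ≠ 0 := by tauto
    have hs1 : 1 ≤ s ^ 2 := by nlinarith [sq_nonneg s, sq_abs s, Int.one_le_abs hs]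
    nlinarith [hs1, hm3]
  by_cases ht1 : t = 1
  · subst ht1
    have := key1 d m r hm3 hRD hr1 hr2 n hmn s
    linarith [this]
  by_cases ht1' : t = -1
  · subst ht1'
    have := key1 d m r hm3 hRD hr1 hr2 n hmn (-s)
    nlinarith [this]
  · have ht4 : 4 ≤ t ^ 2 := by
      rcases le_or_gt 2 t with h2 | h2
      · nlinarith
      rcases le_or_gt t (-2) with h3 | h3
      · nlinarith
      omega
    have hid : 4 * m * (m * (2 * s + t) ^ 2 + (m ^ 2 + d - 4) * (2 * s + t) * t + m * d * t ^ 2)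
        = (2 * m * (2 * s + t) + (m ^ 2 + d - 4) * t) ^ 2 + (16 * m ^ 2 - (r - 4) ^ 2) * t ^ 2 := by
      subst hRD; ring
    have hE : 4 * m ^ 2 ≤ 16 * m ^ 2 - (r - 4) ^ 2 := by nlinarith
    nlinarith [sq_nonneg (2 * m * (2 * s + t) + (m ^ 2 + d - 4) * t), hid, hE, ht4,
      mul_le_mul hE ht4 (by positivity) (by nlinarith)]

end helpers

/-- `m` is the minimum of `Tr(a x²)` over nonzero integers `x` of `K`. -/
def IsTraceMin (K : Type*) [Field K] [NumberField K] (a : K) (m : ℚ) : Prop :=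
  (∃ x : 𝓞 K, x ≠ 0 ∧ Algebra.trace ℚ K (a * (x : K) ^ 2) = m) ∧
    ∀ x : 𝓞 K, x ≠ 0 → m ≤ Algebra.trace ℚ K (a * (x : K) ^ 2)

/-- A totally positive `a` is perfect if it is the unique totally positive element `b`
with `Tr(b x²) = μ(a)` for all `x ∈ M(a)`. -/
def IsPerfectForm (K : Type*) [Field K] [NumberField K] (a : K) : Prop :=
  TotPos a ∧ ∃ m : ℚ, IsTraceMin K a m ∧
    ∀ b : K, TotPos b →
      (∀ x : 𝓞 K, x ≠ 0 → Algebra.trace ℚ K (a * (x : K) ^ 2) = m →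
        Algebra.trace ℚ K (b * (x : K) ^ 2) = m) → b = a

set_option maxHeartbeats 1000000 in
theorem stmt15 (d : ℤ) (hd1 : 1 < d) (hdsf : Squarefree d) (hd4 : d % 4 = 1)
    (m r : ℤ) (hm : 2 ≤ m) (hmodd : Odd m)
    (hRD : d = m ^ 2 + r) (hr1 : -m < r) (hr2 : r ≤ m) (hrdvd : r ∣ 4 * m)
    (K : Type*) [Field K] [NumberField K] (sq : K)
    (hsq : sq ^ 2 = (d : K)) (hdeg : finrank ℚ K = 2)
    -- `O_K = ℤ[(1+√d)/2]`
    (ω : 𝓞 K) (hω : (ω : K) = (1 + sq) / 2) (hOK : Algebra.adjoin ℤ {ω} = ⊤)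
    (a : K) (ha : a = ((2 * m * d : ℤ) : K) + ((m ^ 2 + d - 4 : ℤ) : K) * sq) :
    TotPos a ∧
    (∃ μ : ℚ, IsTraceMin K a μ ∧
      ∃ x₁ x₂ : 𝓞 K, (x₁ : K) = 1 ∧ (x₂ : K) = ((m : K) - sq) / 2 ∧
        Algebra.trace ℚ K (a * (x₁ : K) ^ 2) = μ ∧
        Algebra.trace ℚ K (a * ((-x₁ : 𝓞 K) : K) ^ 2) = μ ∧
        Algebra.trace ℚ K (a * (x₂ : K) ^ 2) = μ ∧
        Algebra.trace ℚ K (a * ((-x₂ : 𝓞 K) : K) ^ 2) = μ) ∧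
    IsPerfectForm K a := by
  obtain ⟨n, hmn⟩ := hmodd
  have hm3 : 3 ≤ m := by omega
  have hd0 : (0 : ℤ) < d := by linarith
  -- d is not a square
  have hnotsqZ : ∀ z : ℤ, z ^ 2 ≠ d := by
    intro z hz
    have hdvd : z * z ∣ d := by rw [← hz]; exact ⟨1, by ring⟩
    have := hdsf z hdvd
    rcases Int.isUnit_iff.mp this with h1 | h1 <;> subst h1 <;> simp at hz <;> omega
  have hnotsqQ : ∀ q : ℚ, q ^ 2 ≠ (d : ℚ) := by
    intro q hq
    have hint : IsIntegral ℤ q := by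
      refine ⟨Polynomial.X ^ 2 - Polynomial.C d, Polynomial.monic_X_pow_sub_C d two_ne_zero, ?_⟩
      rw [Polynomial.eval₂_sub, Polynomial.eval₂_X_pow, Polynomial.eval₂_C]
      simp [hq]
    obtain ⟨z, hz⟩ := IsIntegrallyClosed.isIntegral_iff.mp hint
    have hz' : (z : ℚ) = q := by exact_mod_cast hz
    apply hnotsqZ z
    have : (z : ℚ) ^ 2 = (d : ℚ) := by rw [hz']; exact hq
    exact_mod_cast this
  have hsqirr : ∀ q : ℚ, (q : K) ≠ sq := by
    intro q hq
    apply hnotsqQ q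
    have h3 : ((q ^ 2 : ℚ) : K) = ((d : ℤ) : K) := by push_cast; rw [hq, hsq]
    exact_mod_cast h3
  have hsqne0 : sq ≠ 0 := by
    intro h; apply hsqirr 0; simp [h]
  -- basis
  have hli : LinearIndependent ℚ ![(1 : K), sq] := by
    rw [linearIndependent_fin2]
    refine ⟨by simpa using hsqne0, fun c hc => ?_⟩
    simp only [Matrix.cons_val_one, Matrix.head_cons, Matrix.cons_val_zero] at hc
    have hc0 : c ≠ 0 := by rintro rfl; simp at hc
    have hcK : (c : K) ≠ 0 := by exact_mod_cast hc0
    have hc' : (c : K) * sq = 1 := by rw [← Rat.smul_def]; exact hc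
    have hsqc : sq = (c : K)⁻¹ := by field_simp; linear_combination hc'
    apply hsqirr c⁻¹
    push_cast
    exact hsqc.symm
  have hcard : Fintype.card (Fin 2) = finrank ℚ K := by simp [hdeg]
  set B := basisOfLinearIndependentOfCardEqFinrank hli hcard with hBdef
  have hB : ⇑B = ![(1 : K), sq] := coe_basisOfLinearIndependentOfCardEqFinrank hli hcard
  have hB0 : B 0 = 1 := by rw [hB]; rfl
  have hB1 : B 1 = sq := by rw [hB]; rfl
  have hreprform : ∀ u v : ℚ, (u : K) + (v : K) * sq = u • B 0 + v • B 1 := by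
    intro u v
    rw [hB0, hB1, Rat.smul_def, Rat.smul_def]; ring
  have hrepr0 : ∀ u v : ℚ, B.repr ((u : K) + (v : K) * sq) 0 = u := by
    intro u v
    rw [hreprform u v]
    simp [Finsupp.single_apply]
  have hrepr1 : ∀ u v : ℚ, B.repr ((u : K) + (v : K) * sq) 1 = v := by
    intro u v
    rw [hreprform u v]
    simp [Finsupp.single_apply]
  have htr : ∀ u v : ℚ, Algebra.trace ℚ K ((u : K) + (v : K) * sq) = 2 * u := by
    intro u v
    rw [Algebra.trace_eq_matrix_trace B, Matrix.trace_fin_two,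
      Algebra.leftMulMatrix_eq_repr_mul, Algebra.leftMulMatrix_eq_repr_mul, hB0, hB1]
    have h1 : ((u : K) + (v : K) * sq) * 1 = (u : K) + (v : K) * sq := mul_one _
    have h2 : ((u : K) + (v : K) * sq) * sq = ((v * d : ℚ) : K) + ((u : ℚ) : K) * sq := by
      push_cast
      linear_combination (v : K) * hsq
    rw [h1, h2, hrepr0, hrepr1]
    ring
  have hmul : ∀ u1 v1 u2 v2 : ℚ, ((u1 : K) + (v1 : K) * sq) * ((u2 : K) + (v2 : K) * sq)
      = ((u1 * u2 + d * v1 * v2 : ℚ) : K) + ((u1 * v2 + u2 * v1 : ℚ) : K) * sq := by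
    intro u1 v1 u2 v2
    push_cast
    linear_combination ((v1 : K) * (v2 : K)) * hsq
  -- general trace formula
  have htrG2 : ∀ u v p q : ℚ,
      Algebra.trace ℚ K (((u : K) + (v : K) * sq) * ((p : K) + (q : K) * sq) ^ 2)
      = 2 * u * (p ^ 2 + d * q ^ 2) + 4 * d * v * p * q := by
    intro u v p q
    rw [pow_two, hmul p q p q, hmul u v, htr]
    push_cast
    ring
  have haQ : a = (((2 * m * d : ℚ) : K)) + (((m ^ 2 + d - 4 : ℚ) : K)) * sq := by
    rw [ha]; push_cast; ring
  -- total positivity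
  have hcZ : 0 < m ^ 2 + d - 4 := by nlinarith
  have hkeyZ : (m ^ 2 + d - 4) ^ 2 < 4 * m ^ 2 * d := by
    have h1 : 0 < 4 * m - (r - 4) := by omega
    have h2 : 0 < 4 * m + (r - 4) := by omega
    nlinarith [mul_pos h1 h2]
  have htp : TotPos a := by
    intro τ
    have hs2 : (τ sq) ^ 2 = (d : ℝ) := by
      rw [← map_pow, hsq]; simp
    have hτa : τ a = ((2 * m * d : ℤ) : ℝ) + ((m ^ 2 + d - 4 : ℤ) : ℝ) * τ sq := by
      rw [ha, map_add, map_mul, map_intCast, map_intCast]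
    rw [hτa]
    have hApos : (0 : ℝ) < ((2 * m * d : ℤ) : ℝ) := by
      have : (0 : ℤ) < 2 * m * d := by positivity
      exact_mod_cast this
    have hzP : (0 : ℤ) < (2 * m * d) ^ 2 - (m ^ 2 + d - 4) ^ 2 * d := by nlinarith [hkeyZ, hd0]
    have hPpos : (0 : ℝ) < ((2 * m * d : ℤ) : ℝ) ^ 2
        - ((m ^ 2 + d - 4 : ℤ) : ℝ) ^ 2 * ((d : ℤ) : ℝ) := by
      exact_mod_cast hzP
    have hprod : (((2 * m * d : ℤ) : ℝ) + ((m ^ 2 + d - 4 : ℤ) : ℝ) * τ sq)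
        * (((2 * m * d : ℤ) : ℝ) - ((m ^ 2 + d - 4 : ℤ) : ℝ) * τ sq)
        = ((2 * m * d : ℤ) : ℝ) ^ 2 - ((m ^ 2 + d - 4 : ℤ) : ℝ) ^ 2 * ((d : ℤ) : ℝ) := by
      linear_combination (-(((m ^ 2 + d - 4 : ℤ) : ℝ)) ^ 2) * hs2
    by_contra hcon
    push_neg at hcon
    have h3 : 0 < ((2 * m * d : ℤ) : ℝ) - ((m ^ 2 + d - 4 : ℤ) : ℝ) * τ sq := by linarith
    have h4 := mul_nonpos_of_nonpos_of_nonneg hcon h3.le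
    rw [hprod] at h4
    linarith
  -- omega squared
  obtain ⟨k4, hk4⟩ : ∃ k, d = 4 * k + 1 := ⟨d / 4, by omega⟩
  have hdK : (d : K) = 4 * (k4 : K) + 1 := by exact_mod_cast hk4
  have hcoeInt : ∀ z : ℤ, ((z : 𝓞 K) : K) = (z : K) := fun z => by
    rw [RingOfIntegers.coe_eq_algebraMap, map_intCast]
  have hω2 : ω ^ 2 = (k4 : 𝓞 K) + ω := by
    apply RingOfIntegers.coe_injective
    show ((ω ^ 2 : 𝓞 K) : K) = (((k4 : 𝓞 K) + ω : 𝓞 K) : K)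
    push_cast [hω, hcoeInt]
    linear_combination ((1:K)/4) * hsq + ((1:K)/4) * hdK
  -- decomposition of integers
  have hdec : ∀ x : 𝓞 K, ∃ s t : ℤ, x = (s : 𝓞 K) + (t : 𝓞 K) * ω := by
    intro x
    let S : Subalgebra ℤ (𝓞 K) :=
      { carrier := {y | ∃ s t : ℤ, y = (s : 𝓞 K) + (t : 𝓞 K) * ω}
        add_mem' := by
          rintro y z ⟨s, t, rfl⟩ ⟨s', t', rfl⟩
          exact ⟨s + s', t + t', by push_cast; ring⟩
        mul_mem' := by
          rintro y z ⟨s, t, rfl⟩ ⟨s', t', rfl⟩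
          refine ⟨s * s' + t * t' * k4, s * t' + t * s' + t * t', ?_⟩
          push_cast
          linear_combination ((t : 𝓞 K) * (t' : 𝓞 K)) * hω2
        one_mem' := ⟨1, 0, by push_cast; ring⟩
        zero_mem' := ⟨0, 0, by push_cast; ring⟩
        algebraMap_mem' := fun r => ⟨r, 0, by push_cast; simp⟩ }
    have hωS : ω ∈ S := ⟨0, 1, by push_cast; ring⟩
    have hxS : x ∈ Algebra.adjoin ℤ ({ω} : Set (𝓞 K)) := by rw [hOK]; trivial
    exact Algebra.adjoin_le (Set.singleton_subset_iff.mpr hωS) hxS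
  -- coercion form
  have hcoe : ∀ (x : 𝓞 K) (s t : ℤ), x = (s : 𝓞 K) + (t : 𝓞 K) * ω →
      (x : K) = (((s : ℚ) + (t : ℚ) / 2 : ℚ) : K) + (((t : ℚ) / 2 : ℚ) : K) * sq := by
    intro x s t hx
    rw [hx]
    push_cast [hω, hcoeInt]
    ring
  -- trace value on integers
  have htrZ : ∀ (x : 𝓞 K) (s t : ℤ), x = (s : 𝓞 K) + (t : 𝓞 K) * ω →
      Algebra.trace ℚ K (a * (x : K) ^ 2)
      = ((d * (m * (2 * s + t) ^ 2 + (m ^ 2 + d - 4) * (2 * s + t) * t + m * d * t ^ 2) : ℤ) : ℚ) := by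
    intro x s t hx
    rw [hcoe x s t hx, haQ, htrG2]
    push_cast
    ring
  set μ : ℚ := ((4 * m * d : ℤ) : ℚ) with hμ
  -- x₁ and x₂
  set x₁ : 𝓞 K := 1 with hx₁
  set x₂ : 𝓞 K := ((n + 1 : ℤ) : 𝓞 K) - ω with hx₂
  have hx₂dec : x₂ = ((n + 1 : ℤ) : 𝓞 K) + ((-1 : ℤ) : 𝓞 K) * ω := by rw [hx₂]; push_cast; ring
  have hx₁dec : x₁ = ((1 : ℤ) : 𝓞 K) + ((0 : ℤ) : 𝓞 K) * ω := by rw [hx₁]; push_cast; ring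
  have hmx₁dec : -x₁ = ((-1 : ℤ) : 𝓞 K) + ((0 : ℤ) : 𝓞 K) * ω := by rw [hx₁]; push_cast; ring
  have hmx₂dec : -x₂ = ((-(n + 1) : ℤ) : 𝓞 K) + ((1 : ℤ) : 𝓞 K) * ω := by rw [hx₂]; push_cast; ring
  have hx₁K : (x₁ : K) = 1 := by rw [hx₁]; exact map_one (algebraMap (𝓞 K) K)
  have hx₂K : (x₂ : K) = ((m : K) - sq) / 2 := by
    have hmK : (m : K) = 2 * (n : K) + 1 := by exact_mod_cast hmn
    rw [hx₂]
    push_cast [hω, hcoeInt, hmK]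
    ring
  -- trace values at the four points
  have htr1 : Algebra.trace ℚ K (a * (x₁ : K) ^ 2) = μ := by
    rw [htrZ x₁ 1 0 hx₁dec, hμ]; push_cast; ring
  have htrm1 : Algebra.trace ℚ K (a * ((-x₁ : 𝓞 K) : K) ^ 2) = μ := by
    rw [htrZ (-x₁) (-1) 0 hmx₁dec, hμ]; push_cast; ring
  have htr2 : Algebra.trace ℚ K (a * (x₂ : K) ^ 2) = μ := by
    rw [htrZ x₂ (n + 1) (-1) hx₂dec, hμ, hRD, hmn]; push_cast; ring
  have htrm2 : Algebra.trace ℚ K (a * ((-x₂ : 𝓞 K) : K) ^ 2) = μ := by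
    rw [htrZ (-x₂) (-(n + 1)) 1 hmx₂dec, hμ, hRD, hmn]; push_cast; ring
  have hx₁ne : x₁ ≠ 0 := one_ne_zero
  have hx₂ne : x₂ ≠ 0 := by
    intro h
    have : (x₂ : K) = 0 := by rw [h]; simp
    rw [hx₂K] at this
    have h2 : (m : K) - sq = 0 := by
      field_simp at this
      linear_combination this
    apply hsqirr (m : ℚ)
    push_cast
    linear_combination h2
  -- minimality
  have hmin : ∀ x : 𝓞 K, x ≠ 0 → μ ≤ Algebra.trace ℚ K (a * (x : K) ^ 2) := by
    intro x hx
    obtain ⟨s, t, hst⟩ := hdec x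
    rw [htrZ x s t hst, hμ]
    have hne : ¬(s = 0 ∧ t = 0) := by
      rintro ⟨rfl, rfl⟩
      apply hx
      rw [hst]; push_cast; ring
    have hQ := keyQ d m r hm3 hRD hr1 hr2 n hmn s t hne
    have : 4 * m * d ≤ d * (m * (2 * s + t) ^ 2 + (m ^ 2 + d - 4) * (2 * s + t) * t + m * d * t ^ 2) := by
      nlinarith [hQ, hd0]
    exact_mod_cast this
  have htmin : IsTraceMin K a μ := ⟨⟨x₁, hx₁ne, htr1⟩, hmin⟩
  refine ⟨htp, ⟨μ, htmin, x₁, x₂, hx₁K, hx₂K, htr1, htrm1, htr2, htrm2⟩, htp, μ, htmin, ?_⟩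
  -- perfection
  intro b htpb hb
  have hbrep : b = ((B.repr b 0 : ℚ) : K) + ((B.repr b 1 : ℚ) : K) * sq := by
    have h := B.sum_repr b
    rw [Fin.sum_univ_two, hB0, hB1, Rat.smul_def, Rat.smul_def, mul_one] at h
    exact h.symm
  set u : ℚ := B.repr b 0 with hu
  set v : ℚ := B.repr b 1 with hv
  have heq1 : Algebra.trace ℚ K (b * (x₁ : K) ^ 2) = μ := hb x₁ hx₁ne htr1
  have heq2 : Algebra.trace ℚ K (b * (x₂ : K) ^ 2) = μ := hb x₂ hx₂ne htr2
  rw [hbrep, hx₁K] at heq1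
  have h1' : ((u : K) + (v : K) * sq) * (1 : K) ^ 2
      = ((u : K) + (v : K) * sq) * (((1 : ℚ) : K) + ((0 : ℚ) : K) * sq) ^ 2 := by push_cast; ring
  rw [h1', htrG2] at heq1
  have huval : u = (2 * m * d : ℚ) := by
    rw [hμ] at heq1; push_cast at heq1; linarith
  have hx₂Q : (x₂ : K) = (((m : ℚ) / 2 : ℚ) : K) + (((-1 : ℚ) / 2 : ℚ) : K) * sq := by
    rw [hx₂K]; push_cast; ring
  rw [hbrep, hx₂Q, htrG2] at heq2
  have hdQ : (d : ℚ) ≠ 0 := by exact_mod_cast hd0.ne'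
  have hmQ : (m : ℚ) ≠ 0 := by
    have : (0 : ℤ) < m := by omega
    exact_mod_cast this.ne'
  have hvval : v = (m ^ 2 + d - 4 : ℚ) := by
    have hcancel : (d : ℚ) * m * v = (d : ℚ) * m * ((m : ℚ) ^ 2 + d - 4) := by
      rw [hμ] at heq2; push_cast at heq2 huval ⊢
      linear_combination (-1 : ℚ) * heq2 + (((m : ℚ) ^ 2 + (d : ℚ)) / 2) * huval
    exact mul_left_cancel₀ (by exact mul_ne_zero hdQ hmQ) hcancel
  rw [hbrep, huval, hvval, ha]
  push_cast
  ring
end
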